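/- Let H be a Hilbert space, p : H → H a Fredholm operator of index 0 that is injective on the orthogonal complement of its kernel (i.e., p restricted to (ker p)^⊥ is an isomorphism onto its range), and let a : H → H be a bounded operator. Write a in 2×2 block form with respect to the decompositions H = ker p ⊕ (ker p)^⊥ and H = ker p* ⊕ (ker p*)^⊥, with blocks a₁₁ : ker p → ker p*, a₁₂, a₂₁, a₂₂. If the compression π' a π of a to a map ker p → ker p* is invertible (where π, π' are the orthogonal projections onto ker p and ker p*), then for all sufficiently small ε > 0 the operator p + ε a is injective. -/

import Mathlib

set_option maxHeartbeats 1000000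

open Module
open Submodule

-- p restricted to (ker p)ᗮ is bounded below when range is closed
lemma aux_bdd_below {H : Type*} [NormedAddCommGroup H] [InnerProductSpace ℂ H] [CompleteSpace H]
    (p : H →L[ℂ] H)
    (hker : FiniteDimensional ℂ (LinearMap.ker (p : H →ₗ[ℂ] H)))
    (hclosed : IsClosed (LinearMap.range (p : H →ₗ[ℂ] H) : Set H))
    (hinj : ∀ x ∈ (LinearMap.ker (p : H →ₗ[ℂ] H))ᗮ, p x = 0 → x = 0) :
    ∃ M : ℝ, 0 ≤ M ∧ ∀ v ∈ (LinearMap.ker (p : H →ₗ[ℂ] H))ᗮ, ‖v‖ ≤ M * ‖p v‖ := by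
  classical
  haveI : CompleteSpace (LinearMap.ker (p : H →ₗ[ℂ] H)) := FiniteDimensional.complete ℂ _
  set K : Submodule ℂ H := LinearMap.ker (p : H →ₗ[ℂ] H) with hKdef
  set R : Submodule ℂ H := LinearMap.range (p : H →ₗ[ℂ] H) with hRdef
  haveI : CompleteSpace R := hclosed.completeSpace_coe
  have hmem : ∀ v : Kᗮ, p (v : H) ∈ R := fun v => ⟨v, rfl⟩
  let q : Kᗮ →L[ℂ] R := (p.comp Kᗮ.subtypeL).codRestrict R hmem
  have hqker : LinearMap.ker (q : Kᗮ →ₗ[ℂ] R) = ⊥ := by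
    rw [LinearMap.ker_eq_bot]
    intro v w hvw
    have h1 : p (v : H) = p (w : H) := congrArg Subtype.val hvw
    have h2 : p ((v : H) - w) = 0 := by rw [map_sub, h1, sub_self]
    have h3 : ((v : H) - w) ∈ Kᗮ := Kᗮ.sub_mem v.2 w.2
    have := hinj _ h3 h2
    exact Subtype.ext (sub_eq_zero.mp this)
  have hqrange : LinearMap.range (q : Kᗮ →ₗ[ℂ] R) = ⊤ := by
    rw [LinearMap.range_eq_top]
    rintro ⟨-, x, rfl⟩
    refine ⟨⟨x - orthogonalProjection K x, sub_starProjection_mem_orthogonal x⟩, ?_⟩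
    apply Subtype.ext
    show p (x - orthogonalProjection K x) = p x
    have : p ((orthogonalProjection K x : H)) = 0 := (orthogonalProjection K x).2
    rw [map_sub, this, sub_zero]
  let e := ContinuousLinearEquiv.ofBijective q hqker hqrange
  refine ⟨‖(e.symm : R →L[ℂ] Kᗮ)‖, norm_nonneg _, fun v hv => ?_⟩
  set v' : Kᗮ := ⟨v, hv⟩
  have h1 : v' = e.symm (e v') := (e.symm_apply_apply v').symm
  have h2 : ‖e.symm (e v')‖ ≤ ‖(e.symm : R →L[ℂ] Kᗮ)‖ * ‖e v'‖ :=
    (e.symm : R →L[ℂ] Kᗮ).le_opNorm _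
  have h3 : ‖e v'‖ = ‖p v‖ := rfl
  calc ‖v‖ = ‖v'‖ := rfl
    _ = ‖e.symm (e v')‖ := by rw [← h1]
    _ ≤ ‖(e.symm : R →L[ℂ] Kᗮ)‖ * ‖e v'‖ := h2
    _ = ‖(e.symm : R →L[ℂ] Kᗮ)‖ * ‖p v‖ := by rw [h3]

/-- If `p` is a Fredholm operator of index `0` on a Hilbert space, injective on the
orthogonal complement of its kernel, `a` is bounded, and the compression `π' a π` of
`a` to a map `ker p → ker p*` is invertible (with `π, π'` the orthogonal projections
onto `ker p` and `ker p*`), then `p + ε a` is injective for all small `ε > 0`. -/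
theorem stmt_4 {H : Type*} [NormedAddCommGroup H] [InnerProductSpace ℂ H] [CompleteSpace H]
    (p a : H →L[ℂ] H)
    (hker : FiniteDimensional ℂ (LinearMap.ker (p : H →ₗ[ℂ] H)))
    (hclosed : IsClosed (LinearMap.range (p : H →ₗ[ℂ] H) : Set H))
    (hcoker : FiniteDimensional ℂ (H ⧸ LinearMap.range (p : H →ₗ[ℂ] H)))
    (hindex : finrank ℂ (LinearMap.ker (p : H →ₗ[ℂ] H)) =
      finrank ℂ (H ⧸ LinearMap.range (p : H →ₗ[ℂ] H)))
    (hinj : ∀ x ∈ (LinearMap.ker (p : H →ₗ[ℂ] H))ᗮ, p x = 0 → x = 0)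
    [Submodule.HasOrthogonalProjection (LinearMap.ker (ContinuousLinearMap.adjoint p : H →ₗ[ℂ] H))]
    (hcompr : Function.Bijective fun x : LinearMap.ker (p : H →ₗ[ℂ] H) =>
      Submodule.orthogonalProjectionOnto (LinearMap.ker (ContinuousLinearMap.adjoint p : H →ₗ[ℂ] H)) (a x)) :
    ∃ ε₀ > (0:ℝ), ∀ ε : ℝ, 0 < ε → ε < ε₀ →
      Function.Injective ⇑(p + (ε : ℂ) • a) := by
  classical
  haveI : CompleteSpace (LinearMap.ker (p : H →ₗ[ℂ] H)) := FiniteDimensional.complete ℂ _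
  set K : Submodule ℂ H := LinearMap.ker (p : H →ₗ[ℂ] H) with hKdef
  set K' : Submodule ℂ H := LinearMap.ker (ContinuousLinearMap.adjoint p : H →ₗ[ℂ] H) with hK'def
  obtain ⟨M₁, hM₁0, hM₁⟩ := aux_bdd_below p hker hclosed hinj
  -- compression bound
  let cmap : K →ₗ[ℂ] K' :=
    { toFun := fun u => orthogonalProjection K' (a u)
      map_add' := by intro x y; simp
      map_smul' := by intro c x; simp }
  have hcb : Function.Bijective cmap := hcompr
  let eq2 := LinearEquiv.ofBijective cmap hcb
  haveI : FiniteDimensional ℂ K' := Module.Finite.equiv eq2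
  let inv2 : K' →L[ℂ] K := LinearMap.toContinuousLinearMap eq2.symm.toLinearMap
  set M₂ := ‖inv2‖ with hM₂def
  have hM₂0 : 0 ≤ M₂ := hM₂def ▸ norm_nonneg inv2
  have hM₂ : ∀ u : K, ‖(u : H)‖ ≤ M₂ * ‖((orthogonalProjection K' (a u)) : H)‖ := by
    intro u
    have h1 : u = inv2 (cmap u) := by
      show u = eq2.symm (eq2 u)
      rw [eq2.symm_apply_apply]
    calc ‖(u : H)‖ = ‖u‖ := rfl
      _ = ‖inv2 (cmap u)‖ := by rw [← h1]
      _ ≤ M₂ * ‖cmap u‖ := inv2.le_opNorm _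
      _ = M₂ * ‖((orthogonalProjection K' (a u)) : H)‖ := rfl
  -- projection is a contraction
  have hproj : ∀ y : H, ‖((orthogonalProjection K' y) : H)‖ ≤ ‖y‖ := by
    intro y
    calc ‖((orthogonalProjection K' y) : H)‖ = ‖orthogonalProjection K' y‖ := rfl
      _ ≤ ‖orthogonalProjection K'‖ * ‖y‖ := (orthogonalProjection K').le_opNorm y
      _ ≤ 1 * ‖y‖ :=
          mul_le_mul_of_nonneg_right (orthogonalProjection_norm_le K') (norm_nonneg y)
      _ = ‖y‖ := one_mul ‖y‖
  set D : ℝ := M₁ * ‖a‖ * (1 + M₂ * ‖a‖) with hDdef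
  have hD0 : 0 ≤ D := by positivity
  refine ⟨(D + 1)⁻¹, by positivity, fun ε hε hε' => ?_⟩
  have hεD : ε * D < 1 := by
    have h1 : ε * (D + 1) < (D + 1)⁻¹ * (D + 1) :=
      mul_lt_mul_of_pos_right hε' (by positivity)
    rw [inv_mul_cancel₀ (by positivity : (D:ℝ) + 1 ≠ 0)] at h1
    nlinarith
  -- reduce to kernel
  intro x y hxy
  rw [← sub_eq_zero]
  set z := x - y with hzdef
  have hz : p z + (ε : ℂ) • a z = 0 := by
    have h0 : (p + (ε : ℂ) • a) z = 0 := by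
      rw [hzdef, map_sub, hxy, sub_self]
    exact h0
  -- decompose
  set u : K := orthogonalProjection K z with hudef
  set v : H := z - u with hvdef
  have hv : v ∈ Kᗮ := sub_starProjection_mem_orthogonal z
  have hzuv : z = (u : H) + v := by rw [hvdef]; abel
  have hpu : p (u : H) = 0 := u.2
  have hpz : p z = p v := by rw [hzuv, map_add, hpu, zero_add]
  have hpv : p v = -((ε : ℂ) • a z) := by
    rw [← hpz]; exact eq_neg_of_add_eq_zero_left hz
  have hpvz : orthogonalProjection K' (p v) = 0 := by
    rw [orthogonalProjectionOnto_eq_zero_iff, Submodule.mem_orthogonal]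
    intro w hw
    have hw0 : ContinuousLinearMap.adjoint p w = 0 := hw
    calc inner ℂ w (p v) = inner ℂ (ContinuousLinearMap.adjoint p w) v :=
          (ContinuousLinearMap.adjoint_inner_left p v w).symm
      _ = (0 : ℂ) := by rw [hw0, inner_zero_left]
  have hεne : (ε : ℂ) ≠ 0 := by exact_mod_cast hε.ne'
  have haz : orthogonalProjection K' (a z) = 0 := by
    have h1 : (0 : K') = -((ε : ℂ) • orthogonalProjection K' (a z)) := by
      rw [← hpvz, hpv, map_neg, map_smul]
    have h2 : ((ε : ℂ) • orthogonalProjection K' (a z)) = 0 := neg_eq_zero.mp h1.symm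
    exact (smul_eq_zero.mp h2).resolve_left hεne
  have hauv : orthogonalProjection K' (a (u : H)) = - orthogonalProjection K' (a v) := by
    have h1 : orthogonalProjection K' (a ((u : H) + v)) = 0 := by rw [← hzuv]; exact haz
    rw [map_add, map_add] at h1
    exact eq_neg_of_add_eq_zero_left h1
  have hu_le : ‖(u : H)‖ ≤ M₂ * (‖a‖ * ‖v‖) := by
    calc ‖(u : H)‖ ≤ M₂ * ‖((orthogonalProjection K' (a u)) : H)‖ := hM₂ u
      _ = M₂ * ‖((orthogonalProjection K' (a v)) : H)‖ := by
          rw [hauv, Submodule.coe_neg, norm_neg]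
      _ ≤ M₂ * ‖a v‖ := mul_le_mul_of_nonneg_left (hproj _) hM₂0
      _ ≤ M₂ * (‖a‖ * ‖v‖) := mul_le_mul_of_nonneg_left (a.le_opNorm v) hM₂0
  have hna : (0:ℝ) ≤ ‖a‖ := norm_nonneg a
  have hv_le : ‖v‖ ≤ ε * D * ‖v‖ := by
    have h1 : ‖v‖ ≤ M₁ * ‖p v‖ := hM₁ v hv
    have h2 : ‖p v‖ = ε * ‖a z‖ := by
      rw [hpv, norm_neg, norm_smul, Complex.norm_real, Real.norm_eq_abs, abs_of_pos hε]
    have h3 : ‖a z‖ ≤ ‖a‖ * ‖z‖ := a.le_opNorm z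
    have h4 : ‖z‖ ≤ ‖(u : H)‖ + ‖v‖ := by rw [hzuv]; exact norm_add_le _ _
    rw [hDdef]
    calc ‖v‖ ≤ M₁ * ‖p v‖ := h1
      _ = M₁ * (ε * ‖a z‖) := by rw [h2]
      _ ≤ M₁ * (ε * (‖a‖ * ‖z‖)) := by gcongr
      _ ≤ M₁ * (ε * (‖a‖ * (‖(u : H)‖ + ‖v‖))) := by gcongr
      _ ≤ M₁ * (ε * (‖a‖ * (M₂ * (‖a‖ * ‖v‖) + ‖v‖))) := by gcongr
      _ = ε * (M₁ * ‖a‖ * (1 + M₂ * ‖a‖)) * ‖v‖ := by ring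
  have hvnorm : ‖v‖ = 0 := by nlinarith [norm_nonneg v]
  have hv0 : v = 0 := norm_eq_zero.mp hvnorm
  have hu0 : (u : H) = 0 := by
    have : ‖(u : H)‖ ≤ 0 := by rw [hvnorm] at hu_le; simpa using hu_le
    exact norm_eq_zero.mp (le_antisymm this (norm_nonneg _))
  rw [hzuv, hu0, hv0, add_zero]
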